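/- arXiv:1712.01583 — 3 statements merged into one kernel-verified Lean document; each statement's English description precedes it below -/
import Mathlib

section
/- Let Γ be a finite simple graph and Δ a full subgraph. The normalizer of the special subgroup A_Δ in A_Γ equals A_{st(Δ)}, where st(Δ) is the full subgraph spanned by Δ together with the vertices adjacent to every vertex of Δ. -/
/-! Basic definitions: right-angled Artin groups, special subgroups,
relative automorphism notions, and graph-theoretic notions from
Day–Wade, "Relative automorphism groups of right-angled Artin groups". -/

namespace RAAGPaper

variable {V : Type}

open scoped commutatorElement

/-- The commutator relations defining the RAAG on a simple graph. -/
def raagRels (G : SimpleGraph V) : Set (FreeGroup V) :=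
  {r | ∃ v w : V, G.Adj v w ∧ r = ⁅FreeGroup.of v, FreeGroup.of w⁆}

/-- The right-angled Artin group on the graph `G`. -/
abbrev RAAG (G : SimpleGraph V) : Type := PresentedGroup (raagRels G)

/-- The generator of `RAAG G` corresponding to a vertex. -/
def gen (G : SimpleGraph V) (v : V) : RAAG G := PresentedGroup.of v

/-- The special subgroup `A_Δ` generated by the vertices of a (full) subgraph `Δ`. -/
def sp (G : SimpleGraph V) (Δ : Set V) : Subgroup (RAAG G) :=
  Subgroup.closure (gen G '' Δ)

/-- The link of a vertex. -/
def lk (G : SimpleGraph V) (v : V) : Set V := {w | G.Adj v w}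

/-- The star of a vertex. -/
def st (G : SimpleGraph V) (v : V) : Set V := insert v (lk G v)

/-- The standard (domination) order: `u ≤ v` iff `lk(u) ⊆ st(v)`. -/
def stdLE (G : SimpleGraph V) (u v : V) : Prop := lk G u ⊆ st G v

/-- An automorphism acts trivially on a subgroup if it agrees with an inner
automorphism on that subgroup. -/
def ActsTrivially {A : Type*} [Group A] (φ : MulAut A) (H : Subgroup A) : Prop :=
  ∃ g : A, ∀ h ∈ H, φ h = g * h * g⁻¹

/-- An automorphism preserves a subgroup if it sends it to a conjugate of itself. -/
def Preserves {A : Type*} [Group A] (φ : MulAut A) (H : Subgroup A) : Prop :=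
  ∃ g : A, Subgroup.map φ.toMonoidHom H = Subgroup.map (MulAut.conj g).toMonoidHom H

/-- `𝒢`-adjacency: adjacent in `G` or contained in a common member of `𝒢`. -/
def gAdj (G : SimpleGraph V) (calG : Set (Set V)) (u w : V) : Prop :=
  G.Adj u w ∨ ∃ Δ ∈ calG, u ∈ Δ ∧ w ∈ Δ

/-- `𝒢`-reachability within a set `S` of vertices. -/
def gReach (G : SimpleGraph V) (calG : Set (Set V)) (S : Set V) : V → V → Prop :=
  Relation.ReflTransGen (fun a b => a ∈ S ∧ b ∈ S ∧ gAdj G calG a b)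

/-- `K` is a union of `𝒢`-components of (the full subgraph on) `S`.
With `calG = ∅` this says `K` is a union of connected components of `S`. -/
def UnionOfComps (G : SimpleGraph V) (calG : Set (Set V)) (S K : Set V) : Prop :=
  K ⊆ S ∧ ∀ u ∈ K, ∀ w, gReach G calG S u w → w ∈ K

/-- The members of `𝒢` not containing the vertex `x`. -/
def calGx (calG : Set (Set V)) (x : V) : Set (Set V) := {Δ ∈ calG | x ∉ Δ}

/-- The `𝒢`-order: `u ≤_𝒢 v` iff `u ≤ v` in the standard order and every member of
`𝒢` containing `u` also contains `v`. -/
def gLE (G : SimpleGraph V) (calG : Set (Set V)) (u v : V) : Prop :=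
  stdLE G u v ∧ ∀ Δ ∈ calG, u ∈ Δ → v ∈ Δ

/-- `Δ` meets at most one `𝒢^x`-component of `Γ - st(x)`. -/
def MeetsAtMostOne (G : SimpleGraph V) (calG : Set (Set V)) (x : V) (Δ : Set V) : Prop :=
  ∀ u w, u ∈ Δ → w ∈ Δ → u ∈ (st G x)ᶜ → w ∈ (st G x)ᶜ →
    gReach G (calGx calG x) ((st G x)ᶜ) u w

/-- `Δ` is upwards closed under the `𝒢`-order. -/
def UpClosed (G : SimpleGraph V) (calG : Set (Set V)) (Δ : Set V) : Prop :=
  ∀ v ∈ Δ, ∀ w, gLE G calG v w → w ∈ Δ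

/-- `Δ` is not `𝒢`-star-separated by any outside vertex. -/
def NotStarSep (G : SimpleGraph V) (calG : Set (Set V)) (Δ : Set V) : Prop :=
  ∀ x, x ∉ Δ → MeetsAtMostOne G calG x Δ

/-- All members of `calG` are proper (special) subgroups. -/
def Proper (calG : Set (Set V)) : Prop := ∀ Δ ∈ calG, Δ ≠ Set.univ

/-- Word length of an element of the RAAG with respect to the standard generators. -/
noncomputable def wordLength (G : SimpleGraph V) (g : RAAG G) : ℕ :=
  sInf {n | ∃ l : List (V × Bool), PresentedGroup.mk (raagRels G) (FreeGroup.mk l) = g ∧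
    l.length = n}

/-- An element is cyclically reduced if it has minimal word length in its
conjugacy class. -/
noncomputable def CycRed (G : SimpleGraph V) (g : RAAG G) : Prop :=
  ∀ h : RAAG G, wordLength G g ≤ wordLength G (h * g * h⁻¹)

/-- The link of `v` computed inside the full subgraph `Δ`. -/
def lkIn (G : SimpleGraph V) (Δ : Set V) (v : V) : Set V := {w ∈ Δ | G.Adj v w}

/-- The star of `v` computed inside the full subgraph `Δ`. -/
def stIn (G : SimpleGraph V) (Δ : Set V) (v : V) : Set V := insert v (lkIn G Δ v)

/-- Domination computed inside the full subgraph `Δ`. -/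
def leIn (G : SimpleGraph V) (Δ : Set V) (u v : V) : Prop :=
  lkIn G Δ u ⊆ stIn G Δ v

/-- The induced peripheral structure `𝒢_Δ`: proper intersections of members of `𝒢`
with `Δ`. -/
def inducedG (calG : Set (Set V)) (Δ : Set V) : Set (Set V) :=
  {Θ | ∃ Λ ∈ calG, Θ = Δ ∩ Λ ∧ Δ ∩ Λ ≠ Δ}

/-- `𝒢` is saturated: it contains every proper special subgroup invariant under
`Out⁰(A_Γ; 𝒢)`, where invariance is characterized by being upwards closed under
`≤_𝒢` and not `𝒢`-star-separated by an outside vertex. -/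
def Saturated (G : SimpleGraph V) (calG : Set (Set V)) : Prop :=
  ∀ Δ : Set V, Δ ≠ Set.univ → UpClosed G calG Δ → NotStarSep G calG Δ → Δ ∈ calG

/-- `φ` is an inversion automorphism. -/
def IsInversion (G : SimpleGraph V) (φ : MulAut (RAAG G)) : Prop :=
  ∃ v, φ (gen G v) = (gen G v)⁻¹ ∧ ∀ w, w ≠ v → φ (gen G w) = gen G w

/-- `φ` is a transvection. -/
def IsTransvection (G : SimpleGraph V) (φ : MulAut (RAAG G)) : Prop :=
  ∃ v w, v ≠ w ∧ stdLE G v w ∧ φ (gen G v) = gen G v * gen G w ∧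
    ∀ u, u ≠ v → φ (gen G u) = gen G u

/-- `φ` is an extended partial conjugation. -/
def IsEPC (G : SimpleGraph V) (φ : MulAut (RAAG G)) : Prop :=
  ∃ x K, UnionOfComps G ∅ ((st G x)ᶜ) K ∧
    (∀ w ∈ K, φ (gen G w) = gen G x * gen G w * (gen G x)⁻¹) ∧
    ∀ w ∉ K, φ (gen G w) = gen G w

/-- The subgroup `Aut⁰(A_Γ)` generated by inversions, transvections and extended
partial conjugations. -/
def Aut0 (G : SimpleGraph V) : Subgroup (MulAut (RAAG G)) :=
  Subgroup.closure {φ | IsInversion G φ ∨ IsTransvection G φ ∨ IsEPC G φ}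

end RAAGPaper

/-!
If `g` normalizes `A_Δ`, let `p` be its image under the retraction `A_Γ → A_{st(Δ)}` that
kills the other vertices. The retraction fixes each conjugate `g v g⁻¹ ∈ A_Δ`, so
`p v p⁻¹ = g v g⁻¹` for `v ∈ Δ` and `p⁻¹ g` commutes with every vertex of `Δ`. By Servatius'
centralizer theorem an element commuting with `v` lies in `A_{st(v)}`, and special subgroups
are closed under intersections, so `p⁻¹ g ∈ A_{⋂ st(v)} ≤ A_{st(Δ)}`.

The centralizer theorem is proved by deleting the vertices `x ∉ st(v)` one at a time from a
finite set `S` with `h ∈ A_S`: `A_S` is the amalgam `A_{S∖x} *_{A_{S∩lk(x)}} A_{S∩st(x)}`,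
no conjugate of `v` lies in the edge group (its `v`-exponent sum is `0`), and an element of an
amalgam conjugating such a factor element back into the factor lies in that factor.
-/

namespace Monoid.PushoutI

open CoprodI NormalWord

variable {ι : Type*} {G : ι → Type*} {H : Type*} [∀ i, Group (G i)] [Group H]
  {φ : ∀ i, H →* G i}

theorem NormalWord.reduced {d : Transversal φ} (w : NormalWord d) : Reduced φ w.toWord := by
  rintro ⟨i, g⟩ hg ⟨h, hh⟩
  refine w.ne_one _ hg ?_
  have hg_snd := (d.compl i).equiv_snd_eq_self_of_mem_of_one_mem (one_mem _) (w.normalized i _ hg)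
  have h_snd := (d.compl i).equiv_snd_eq_one_of_mem_of_one_mem (d.one_mem i) ⟨h, hh⟩
  exact congrArg Subtype.val (hg_snd.symm.trans h_snd)

theorem exists_eq_of_mul_reduced (hφ : ∀ i, Function.Injective (φ i)) (i : ι)
    (x : PushoutI φ) : ∃ (g : G i) (w : Word G), Reduced φ w ∧ w.fstIdx ≠ some i ∧
      x = of i g * ofCoprodI w.prod := by
  classical
  obtain ⟨d⟩ := transversal_nonempty φ hφ
  have hx : x = (equiv (d := d) x).prod := ((equiv (d := d)).symm_apply_apply x).symm
  set n := equiv (d := d) x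
  set p := Word.equivPair i n.toWord
  refine ⟨φ i n.head * p.head, p.tail, fun l hl => n.reduced l ?_, p.fstIdx_ne, ?_⟩
  · exact Word.mem_of_mem_equivPair_tail _ hl
  · rw [hx, NormalWord.prod, map_mul, of_apply_eq_base, mul_assoc, ← ofCoprodI_of, ← map_mul,
      ← Word.prod_rcons, ← Word.equivPair_symm, Equiv.symm_apply_apply]

theorem NeWord.mem_toList_inv {i j : ι} (w : NeWord G i j) {p : Σ i, G i} :
    p ∈ w.inv.toList ↔ ⟨p.1, p.2⁻¹⟩ ∈ w.toList := by
  induction w with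
  | singleton x hx =>
    rcases p with ⟨k, g⟩
    simp only [NeWord.inv, NeWord.toList, List.mem_singleton, Sigma.mk.injEq]
    constructor <;> rintro ⟨rfl, h⟩ <;> simp_all [inv_eq_iff_eq_inv]
  | append w₁ hne w₂ ih₁ ih₂ => simp [NeWord.inv, ih₁, ih₂, or_comm]

theorem Reduced.map_fst_eq_of_prod_eq (hφ : ∀ i, Function.Injective (φ i)) {w₁ w₂ : Word G}
    (hw₁ : Reduced φ w₁) (hw₂ : Reduced φ w₂)
    (h : ofCoprodI (φ := φ) w₁.prod = ofCoprodI w₂.prod) :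
    w₁.toList.map Sigma.fst = w₂.toList.map Sigma.fst := by
  obtain ⟨d⟩ := transversal_nonempty φ hφ
  obtain ⟨n₁, hn₁, hl₁⟩ := hw₁.exists_normalWord_prod_eq d
  obtain ⟨n₂, hn₂, hl₂⟩ := hw₂.exists_normalWord_prod_eq d
  rw [← hl₁, ← hl₂, prod_injective (hn₁.trans (h.trans hn₂.symm))]

theorem conj_notMem_range_of_reduced (hφ : ∀ i, Function.Injective (φ i)) {i j k : ι}
    (t : NeWord G j k) (hji : j ≠ i) (ht : Reduced φ t.toWord) {c : G i}
    (hc : c ∉ (φ i).range) :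
    (ofCoprodI t.prod)⁻¹ * of i c * ofCoprodI t.prod ∉ (of (φ := φ) i).range := by
  rintro ⟨e, he⟩
  have hc1 : c ≠ 1 := fun h => hc (h ▸ one_mem _)
  set W := (t.inv.append hji (NeWord.singleton c hc1)).append hji.symm t
  have hW : Reduced φ W.toWord := by
    intro p hp
    simp only [W, NeWord.toWord, NeWord.toList, List.mem_append, List.mem_singleton] at hp
    rcases hp with (hp | rfl) | hp
    · simpa using ht _ ((NeWord.mem_toList_inv t).1 hp)
    · exact hc
    · exact ht p hp
  have hWprod : ofCoprodI (φ := φ) W.toWord.prod = of i e := by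
    rw [he]
    change ofCoprodI W.prod = _
    simp [W, ofCoprodI_of]
  -- By uniqueness of normal forms a reduced word with product in the range of `of i` is empty
  -- or has one letter, while `W` has at least three.
  by_cases he' : e ∈ (φ i).range
  · obtain ⟨h, rfl⟩ := he'
    have := hW.eq_empty_of_mem_range hφ ⟨h, by rw [hWprod, of_apply_eq_base]⟩
    exact W.toList_ne_nil (congrArg Word.toList this)
  · have he1 : e ≠ 1 := fun h => he' (h ▸ one_mem _)
    have hs : Reduced φ (NeWord.singleton e he1).toWord := by
      simpa [Reduced, NeWord.toWord] using he'
    have hlen := congrArg List.length (hW.map_fst_eq_of_prod_eq hφ hs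
      (by simpa [NeWord.toWord, Word.prod, ofCoprodI_of] using hWprod))
    simp only [W, NeWord.toWord, NeWord.toList, List.map_append, List.length_append,
      List.length_map, List.length_singleton, List.map_cons, List.map_nil] at hlen
    exact t.toList_ne_nil (List.length_eq_zero_iff.1 (by omega))

theorem mem_range_of_conj_mem (hφ : ∀ i, Function.Injective (φ i)) {i : ι} {a : G i}
    (ha : ∀ u : G i, u * a * u⁻¹ ∉ (φ i).range) {x : PushoutI φ}
    (hx : x * of i a * x⁻¹ ∈ (of (φ := φ) i).range) : x ∈ (of (φ := φ) i).range := by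
  -- Write `x⁻¹ = g t` with `t` reduced and not starting in `G i`, so `x a x⁻¹ = t⁻¹ (g⁻¹ a g) t`.
  obtain ⟨g, w, hw, hfst, hxw⟩ := exists_eq_of_mul_reduced hφ i x⁻¹
  rcases eq_or_ne w Word.empty with rfl | hne
  · exact ⟨g⁻¹, by rw [map_inv, ← inv_inv x, hxw]; simp⟩
  · obtain ⟨j, k, t, rfl⟩ := NeWord.of_word w hne
    have hji : j ≠ i := by simpa [Word.fstIdx, NeWord.toWord] using hfst
    refine absurd ?_ (conj_notMem_range_of_reduced hφ t hji hw (ha g⁻¹))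
    rw [← inv_inv x, hxw] at hx
    convert hx using 1
    simp only [NeWord.prod, mul_inv_rev, inv_inv, map_mul, map_inv]
    group

end Monoid.PushoutI

namespace RAAGPaper

open Monoid
open scoped commutatorElement

variable {V : Type} {G : SimpleGraph V}

theorem gen_commute_of_adj {v w : V} (h : G.Adj v w) : Commute (gen G v) (gen G w) := by
  have hrel : (⁅FreeGroup.of v, FreeGroup.of w⁆ : FreeGroup V) ∈
      Subgroup.normalClosure (raagRels G) :=
    Subgroup.subset_normalClosure ⟨v, w, h, rfl⟩
  refine commutatorElement_eq_one_iff_commute.1 ?_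
  change ⁅PresentedGroup.mk (raagRels G) (FreeGroup.of v),
    PresentedGroup.mk (raagRels G) (FreeGroup.of w)⁆ = 1
  rw [← map_commutatorElement]
  exact (QuotientGroup.eq_one_iff _).2 hrel

variable (G) in
noncomputable def lift {K : Type*} [Group K] (f : V → K)
    (hf : ∀ v w, G.Adj v w → Commute (f v) (f w)) : RAAG G →* K :=
  PresentedGroup.toGroup (f := f) (by
    rintro r ⟨v, w, hadj, rfl⟩
    rw [map_commutatorElement, FreeGroup.lift_apply_of, FreeGroup.lift_apply_of]
    exact commutatorElement_eq_one_iff_commute.2 (hf v w hadj))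

@[simp]
theorem lift_gen {K : Type*} [Group K] (f : V → K)
    (hf : ∀ v w, G.Adj v w → Commute (f v) (f w)) (v : V) : lift G f hf (gen G v) = f v :=
  PresentedGroup.toGroup.of _

theorem hom_ext {K : Type*} [Group K] {f g : RAAG G →* K}
    (h : ∀ v, f (gen G v) = g (gen G v)) : f = g :=
  PresentedGroup.ext h

theorem gen_mem_sp {S : Set V} {v : V} (hv : v ∈ S) : gen G v ∈ sp G S :=
  Subgroup.subset_closure ⟨v, hv, rfl⟩

theorem sp_mono {S T : Set V} (h : S ⊆ T) : sp G S ≤ sp G T :=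
  Subgroup.closure_mono (Set.image_mono h)

theorem sp_univ : sp G Set.univ = ⊤ := by
  rw [sp, Set.image_univ]
  exact PresentedGroup.closure_range_of _

theorem exists_finset_mem_sp (g : RAAG G) : ∃ S : Finset V, g ∈ sp G S := by
  classical
  have hdir : Directed (· ≤ ·) fun S : Finset V => sp G S := fun S T =>
    ⟨S ∪ T, sp_mono (by simp), sp_mono (by simp)⟩
  have htop : (⨆ S : Finset V, sp G S) = ⊤ := by
    refine eq_top_iff.2 (sp_univ (G := G) ▸ (Subgroup.closure_le _).2 ?_)
    rintro _ ⟨v, -, rfl⟩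
    exact Subgroup.mem_iSup_of_mem {v} (gen_mem_sp (by simp))
  exact (Subgroup.mem_iSup_of_directed hdir).1 (htop ▸ Subgroup.mem_top g)

variable (G) in
noncomputable def retraction (S : Set V) : RAAG G →* RAAG G := by
  classical
  exact lift G (fun v => if v ∈ S then gen G v else 1) fun v w hadj => by
    split_ifs
    exacts [gen_commute_of_adj hadj, Commute.one_right _, Commute.one_left _,
      Commute.one_left _]

theorem retraction_gen_of_mem {S : Set V} {v : V} (hv : v ∈ S) :
    retraction G S (gen G v) = gen G v := by
  simp [retraction, hv]

theorem retraction_gen_of_notMem {S : Set V} {v : V} (hv : v ∉ S) :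
    retraction G S (gen G v) = 1 := by
  simp [retraction, hv]

theorem retraction_mem_sp (S : Set V) (g : RAAG G) : retraction G S g ∈ sp G S := by
  refine PresentedGroup.generated_by _ ((sp G S).comap (retraction G S)) (fun v => ?_) g
  change retraction G S (gen G v) ∈ sp G S
  by_cases hv : v ∈ S
  · rw [retraction_gen_of_mem hv]; exact gen_mem_sp hv
  · rw [retraction_gen_of_notMem hv]; exact one_mem _

theorem retraction_eq_self {S : Set V} {g : RAAG G} (hg : g ∈ sp G S) :
    retraction G S g = g := by
  induction hg using Subgroup.closure_induction with
  | mem _ hx => obtain ⟨v, hv, rfl⟩ := hx; exact retraction_gen_of_mem hv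
  | one => exact map_one _
  | mul _ _ _ _ ihx ihy => rw [map_mul, ihx, ihy]
  | inv _ _ ih => rw [map_inv, ih]

theorem retraction_comp_retraction (S T : Set V) :
    (retraction G S).comp (retraction G T) = retraction G (S ∩ T) := by
  refine hom_ext fun v => ?_
  by_cases hT : v ∈ T <;> by_cases hS : v ∈ S <;>
    simp [retraction_gen_of_mem, retraction_gen_of_notMem, hS, hT]

theorem sp_inter (S T : Set V) : sp G (S ∩ T) = sp G S ⊓ sp G T := by
  refine le_antisymm (le_inf (sp_mono Set.inter_subset_left) (sp_mono Set.inter_subset_right))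
    fun g ⟨hS, hT⟩ => ?_
  rw [← retraction_eq_self hS, ← retraction_eq_self hT, ← MonoidHom.comp_apply,
    retraction_comp_retraction]
  exact retraction_mem_sp _ _

theorem sp_iInter {ι : Sort*} (T : ι → Set V) : sp G (⋂ i, T i) = ⨅ i, sp G (T i) := by
  classical
  refine le_antisymm (le_iInf fun i => sp_mono (Set.iInter_subset T i)) fun g hg => ?_
  obtain ⟨S, hS⟩ := exists_finset_mem_sp g
  induction S using Finset.strongInduction with
  | H S ih =>
    by_cases hsub : ↑S ⊆ ⋂ i, T i
    · exact sp_mono hsub hS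
    obtain ⟨s, hsS, hsT⟩ := Set.not_subset.1 hsub
    obtain ⟨i, hi⟩ : ∃ i, s ∉ T i := by simpa using hsT
    refine ih (S.erase s) (Finset.erase_ssubset hsS) (sp_mono ?_ ((sp_inter _ _).ge
      ⟨hS, Subgroup.mem_iInf.1 hg i⟩))
    intro u ⟨huS, huT⟩
    exact Finset.mem_erase.2 ⟨fun h => hi (h ▸ huT), huS⟩

variable (G) in
noncomputable def vertexExponent (v : V) : RAAG G →* Multiplicative ℤ := by
  classical
  exact lift G (fun w => if w = v then Multiplicative.ofAdd 1 else 1) fun _ _ _ => Commute.all _ _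

theorem vertexExponent_gen_self (v : V) :
    vertexExponent G v (gen G v) = Multiplicative.ofAdd 1 := by
  simp [vertexExponent]

theorem vertexExponent_eq_one_of_mem_sp {v : V} {T : Set V} (hv : v ∉ T) {g : RAAG G}
    (hg : g ∈ sp G T) : vertexExponent G v g = 1 := by
  refine ((Subgroup.closure_le (vertexExponent G v).ker).2 ?_) hg
  rintro _ ⟨w, hw, rfl⟩
  simp [vertexExponent, ne_of_mem_of_not_mem hw hv]

theorem conj_gen_notMem_sp {v : V} {T : Set V} (hv : v ∉ T) (u : RAAG G) :
    u * gen G v * u⁻¹ ∉ sp G T := fun hu => by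
  have := vertexExponent_eq_one_of_mem_sp hv hu
  rw [map_mul, map_mul, map_inv, mul_comm, ← mul_assoc, inv_mul_cancel, one_mul,
    vertexExponent_gen_self] at this
  exact absurd this (by decide)

section Splitting

open PushoutI

variable (G) (S : Set V) (x : V)

/- `A_S` is the amalgam of `A_{S∖x}` (index `true`) and `A_{S∩st(x)}` (index `false`) over
`A_{S∩lk(x)}`. Only the one-sided inverse `toSplitAmalgam` of `fromSplitAmalgam` on `A_S` is
needed, not the isomorphism. -/
def splitFactor (b : Bool) : Subgroup (RAAG G) :=
  sp G (cond b (S \ {x}) (S ∩ st G x))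

theorem sp_inter_lk_le_splitFactor (b : Bool) : sp G (S ∩ lk G x) ≤ splitFactor G S x b := by
  refine sp_mono ?_
  cases b
  · exact Set.inter_subset_inter_right _ (Set.subset_insert _ _)
  · exact fun w ⟨hwS, hwx⟩ => ⟨hwS, (G.ne_of_adj hwx).symm⟩

abbrev splitIncl (b : Bool) : sp G (S ∩ lk G x) →* splitFactor G S x b :=
  Subgroup.inclusion (sp_inter_lk_le_splitFactor G S x b)

abbrev SplitAmalgam : Type := PushoutI (splitIncl G S x)

abbrev splitOf (b : Bool) : splitFactor G S x b →* SplitAmalgam G S x :=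
  PushoutI.of (φ := splitIncl G S x) b

noncomputable def splitGen (v : V) : SplitAmalgam G S x := by
  classical
  exact if hv : v ∈ S \ {x} then splitOf G S x true ⟨gen G v, gen_mem_sp hv⟩
    else if hv' : v ∈ S ∩ st G x then splitOf G S x false ⟨gen G v, gen_mem_sp hv'⟩ else 1

variable {G S x}

theorem splitGen_of_mem_diff {v : V} (hv : v ∈ S \ {x}) :
    splitGen G S x v = splitOf G S x true ⟨gen G v, gen_mem_sp hv⟩ := by
  simp [splitGen, hv.1, hv.2]

theorem splitGen_of_mem_st {v : V} (hv : v ∈ S ∩ st G x) :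
    splitGen G S x v = splitOf G S x false ⟨gen G v, gen_mem_sp hv⟩ := by
  by_cases hvx : v = x
  · subst hvx
    unfold splitGen
    rw [dif_neg (fun h => h.2 rfl), dif_pos hv]
  · have hlk : v ∈ S ∩ lk G x := ⟨hv.1, (Set.mem_insert_iff.1 hv.2).resolve_left hvx⟩
    rw [splitGen_of_mem_diff ⟨hv.1, hvx⟩]
    exact (of_apply_eq_base (splitIncl G S x) true ⟨gen G v, gen_mem_sp hlk⟩).trans
      (of_apply_eq_base _ false _).symm

theorem splitGen_of_notMem {v : V} (hv : v ∉ S) : splitGen G S x v = 1 := by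
  simp [splitGen, hv]

theorem commute_splitOf_gen (b : Bool) {v w : V} (hv : v ∈ cond b (S \ {x}) (S ∩ st G x))
    (hw : w ∈ cond b (S \ {x}) (S ∩ st G x)) (hadj : G.Adj v w) :
    Commute (splitOf G S x b ⟨gen G v, gen_mem_sp hv⟩)
      (splitOf G S x b ⟨gen G w, gen_mem_sp hw⟩) :=
  (show Commute (⟨gen G v, gen_mem_sp hv⟩ : ↥(splitFactor G S x b))
      ⟨gen G w, gen_mem_sp hw⟩ from Subtype.ext (gen_commute_of_adj hadj).eq).map _

theorem splitGen_commute {v w : V} (hadj : G.Adj v w) :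
    Commute (splitGen G S x v) (splitGen G S x w) := by
  by_cases hvS : v ∈ S
  swap; · rw [splitGen_of_notMem hvS]; exact Commute.one_left _
  by_cases hwS : w ∈ S
  swap; · rw [splitGen_of_notMem hwS]; exact Commute.one_right _
  by_cases hvx : v = x
  · subst hvx
    have hv : v ∈ S ∩ st G v := ⟨hvS, Set.mem_insert _ _⟩
    have hw : w ∈ S ∩ st G v := ⟨hwS, Set.mem_insert_of_mem _ hadj⟩
    rw [splitGen_of_mem_st hv, splitGen_of_mem_st hw]
    exact commute_splitOf_gen false hv hw hadj
  by_cases hwx : w = x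
  · subst hwx
    have hv : v ∈ S ∩ st G w := ⟨hvS, Set.mem_insert_of_mem _ hadj.symm⟩
    have hw : w ∈ S ∩ st G w := ⟨hwS, Set.mem_insert _ _⟩
    rw [splitGen_of_mem_st hv, splitGen_of_mem_st hw]
    exact commute_splitOf_gen false hv hw hadj
  rw [splitGen_of_mem_diff ⟨hvS, hvx⟩, splitGen_of_mem_diff ⟨hwS, hwx⟩]
  exact commute_splitOf_gen true ⟨hvS, hvx⟩ ⟨hwS, hwx⟩ hadj

variable (G S x)

noncomputable def toSplitAmalgam : RAAG G →* SplitAmalgam G S x :=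
  lift G (splitGen G S x) fun _ _ => splitGen_commute

noncomputable def fromSplitAmalgam : SplitAmalgam G S x →* RAAG G :=
  PushoutI.lift (fun b => (splitFactor G S x b).subtype) (sp G (S ∩ lk G x)).subtype
    fun _ => rfl

theorem fromSplitAmalgam_splitOf (b : Bool) (y : splitFactor G S x b) :
    fromSplitAmalgam G S x (splitOf G S x b y) = y :=
  PushoutI.lift_of (φ := splitIncl G S x) _ _ _ y

theorem fromSplitAmalgam_comp_toSplitAmalgam :
    (fromSplitAmalgam G S x).comp (toSplitAmalgam G S x) = retraction G S := by
  refine hom_ext fun v => ?_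
  rw [MonoidHom.comp_apply, toSplitAmalgam, lift_gen]
  by_cases hvS : v ∈ S
  · rw [retraction_gen_of_mem hvS]
    by_cases hvx : v = x
    · subst hvx
      rw [splitGen_of_mem_st ⟨hvS, Set.mem_insert _ _⟩, fromSplitAmalgam_splitOf]
    · rw [splitGen_of_mem_diff ⟨hvS, hvx⟩, fromSplitAmalgam_splitOf]
  · rw [retraction_gen_of_notMem hvS, splitGen_of_notMem hvS, map_one]

end Splitting

theorem mem_sp_diff_of_commute {S : Set V} {v x : V} (hvS : v ∈ S) (hx : x ∉ st G v)
    {h : RAAG G} (hS : h ∈ sp G S) (hc : Commute h (gen G v)) : h ∈ sp G (S \ {x}) := by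
  have hvx : v ∈ S \ {x} := ⟨hvS, fun hxv => hx (hxv ▸ Set.mem_insert _ _)⟩
  have hvlk : v ∉ S ∩ lk G x := fun h => hx (Set.mem_insert_of_mem _ h.2.symm)
  set a : splitFactor G S x true := ⟨gen G v, gen_mem_sp hvx⟩
  have ha : ∀ u, u * a * u⁻¹ ∉ (splitIncl G S x true).range := by
    rintro u ⟨c, hc⟩
    have hmem : ((u * a * u⁻¹ : splitFactor G S x true) : RAAG G) ∈ sp G (S ∩ lk G x) :=
      hc ▸ c.2
    exact conj_gen_notMem_sp (G := G) hvlk (u : RAAG G) hmem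
  have hθ : toSplitAmalgam G S x h * splitOf G S x true a * (toSplitAmalgam G S x h)⁻¹ ∈
      (splitOf G S x true).range := by
    have hgen : toSplitAmalgam G S x (gen G v) = splitOf G S x true a := by
      rw [toSplitAmalgam, lift_gen, splitGen_of_mem_diff hvx]
    rw [← hgen, ← map_mul, ← map_inv, ← map_mul, hc.eq, mul_inv_cancel_right]
    exact ⟨a, hgen.symm⟩
  obtain ⟨y, hy⟩ :=
    PushoutI.mem_range_of_conj_mem (fun _ => Subgroup.inclusion_injective _) ha hθ
  rw [← retraction_eq_self hS, ← fromSplitAmalgam_comp_toSplitAmalgam, MonoidHom.comp_apply,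
    ← hy, fromSplitAmalgam_splitOf]
  exact y.2

theorem mem_sp_st_of_commute_of_mem_sp {v : V} {h : RAAG G} (hc : Commute h (gen G v))
    (S : Finset V) (hv : v ∈ S) (hS : h ∈ sp G S) : h ∈ sp G (st G v) := by
  classical
  induction S using Finset.strongInduction with
  | H S ih =>
    by_cases hsub : ↑S ⊆ st G v
    · exact sp_mono hsub hS
    obtain ⟨x, hxS, hx⟩ := Set.not_subset.1 hsub
    have hvx : v ≠ x := fun hvx => hx (hvx ▸ Set.mem_insert _ _)
    refine ih (S.erase x) (Finset.erase_ssubset hxS) (Finset.mem_erase.2 ⟨hvx, hv⟩) ?_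
    rw [Finset.coe_erase]
    exact mem_sp_diff_of_commute hv hx hS hc

theorem mem_sp_st_of_commute {v : V} {h : RAAG G} (hc : Commute h (gen G v)) :
    h ∈ sp G (st G v) := by
  classical
  obtain ⟨S, hS⟩ := exists_finset_mem_sp h
  exact mem_sp_st_of_commute_of_mem_sp hc (insert v S) (Finset.mem_insert_self v S)
    (sp_mono (by simp) hS)

theorem mem_sp_of_forall_commute {Δ : Set V} {h : RAAG G}
    (hc : ∀ v ∈ Δ, Commute h (gen G v)) :
    h ∈ sp G (Δ ∪ {w | ∀ v ∈ Δ, G.Adj w v}) := by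
  have hst : h ∈ sp G (⋂ v : Δ, st G v) :=
    (sp_iInter _).ge (Subgroup.mem_iInf.2 fun v => mem_sp_st_of_commute (hc v v.2))
  refine sp_mono (fun w hw => ?_) hst
  by_cases hwΔ : w ∈ Δ
  · exact Or.inl hwΔ
  refine Or.inr fun v hv => ?_
  rcases Set.mem_insert_iff.1 (Set.mem_iInter.1 hw ⟨v, hv⟩) with rfl | hadj
  · exact absurd hv hwΔ
  · exact hadj.symm

theorem commute_inv_retraction_mul {S : Set V} {v : V} (hv : v ∈ S) {g : RAAG G}
    (hg : g * gen G v * g⁻¹ ∈ sp G S) : Commute ((retraction G S g)⁻¹ * g) (gen G v) := by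
  set p := retraction G S g
  have hconj : p * gen G v * p⁻¹ = g * gen G v * g⁻¹ := by
    simpa [p, retraction_gen_of_mem hv] using retraction_eq_self hg
  calc p⁻¹ * g * gen G v = p⁻¹ * (g * gen G v * g⁻¹) * g := by group
    _ = p⁻¹ * (p * gen G v * p⁻¹) * g := by rw [hconj]
    _ = gen G v * (p⁻¹ * g) := by group

theorem sp_star_le_normalizer (Δ : Set V) :
    sp G (Δ ∪ {w | ∀ v ∈ Δ, G.Adj w v}) ≤
      Subgroup.normalizer (sp G Δ : Set (RAAG G)) := by
  rw [sp, Subgroup.closure_le]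
  rintro _ ⟨w, hw | hw, rfl⟩
  · exact Subgroup.le_normalizer (gen_mem_sp hw)
  · refine Subgroup.centralizer_le_normalizer _ ?_
    rw [sp, Subgroup.centralizer_closure, Subgroup.mem_centralizer_iff]
    rintro _ ⟨v, hv, rfl⟩
    exact (gen_commute_of_adj (hw v hv).symm).eq

theorem normalizer_special_subgroup_general (G : SimpleGraph V) (Δ : Set V) :
    Subgroup.normalizer (sp G Δ : Set (RAAG G)) = sp G (Δ ∪ {w | ∀ v ∈ Δ, G.Adj w v}) := by
  refine le_antisymm (fun g hg => ?_) (sp_star_le_normalizer Δ)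
  have hc : ∀ v ∈ Δ, Commute ((retraction G (Δ ∪ {w | ∀ v ∈ Δ, G.Adj w v}) g)⁻¹ * g)
      (gen G v) := fun v hv =>
    commute_inv_retraction_mul (Set.mem_union_left _ hv)
      (sp_mono Set.subset_union_left ((hg _).1 (gen_mem_sp hv)))
  simpa using mul_mem (retraction_mem_sp _ g) (mem_sp_of_forall_commute hc)

/-- The normalizer of a special subgroup `A_Δ` is `A_{st(Δ)}`,
where `st(Δ)` is spanned by `Δ` together with the vertices adjacent to every
vertex of `Δ`. -/
theorem normalizer_special_subgroup [Fintype V] (G : SimpleGraph V) (Δ : Set V) :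
    Subgroup.normalizer (sp G Δ : Set (RAAG G)) = sp G (Δ ∪ {w | ∀ v ∈ Δ, G.Adj w v}) :=
  normalizer_special_subgroup_general G Δ

end RAAGPaper
end

section
/- Let Γ be a finite simple graph, x a vertex, u and v vertices of Γ − st(x) lying in distinct connected components K and K' of Γ − st(x). Then the commutator [u,v] is a nontrivial cyclically reduced element of A_Γ, and π^x_K([u,v]) = [xux^{-1}, v] is not conjugate to [u,v] in A_Γ. -/
/-!
Everything is read off homomorphisms out of `A_Γ`. The vertices `x`, `u`, `v` are pairwise
distinct and pairwise non-adjacent, so sending them to the transpositions `(1 2)`, `(0 1)`,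
`(0 2)` of `S₃` and every other vertex to `1` defines a homomorphism. It maps `[u,v]` to a
3-cycle and `[xux⁻¹, v]` to `[(0 2), (0 2)] = 1`, so `[u,v] ≠ 1` and the two commutators are not
conjugate. Every conjugate of `[u,v]` is nontrivial with all exponent sums zero, and a word of
length less than four with all exponent sums zero is already trivial in the free group; so
every conjugate has length at least four, which is the length of `[u,v]`.
-/

theorem FreeGroup.mk_eq_one_of_length_lt_four {α : Type*} {l : List (α × Bool)}
    (hl : l.length < 4)
    (h : ∀ c : α → ℤ, FreeGroup.lift (fun a => Multiplicative.ofAdd (c a)) (FreeGroup.mk l) = 1) :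
    FreeGroup.mk l = 1 := by
  classical
  match l, hl with
  | [], _ => rfl
  | [(a, b)], _ =>
    have := congrArg Multiplicative.toAdd (h 1)
    cases b <;> simp at this
  | [(a, b), (a', b')], _ =>
    have := congrArg Multiplicative.toAdd (h fun t => if t = a then 1 else 0)
    obtain rfl | ha' := eq_or_ne a' a
    · cases b <;> cases b'
      · simp at this
      · exact Quot.sound FreeGroup.Red.Step.cons_not
      · exact Quot.sound FreeGroup.Red.Step.cons_not
      · simp at this
    · cases b <;> cases b' <;> simp [ha'] at this
  | [(_, b), (_, b'), (_, b'')], _ =>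
    have := congrArg Multiplicative.toAdd (h 1)
    cases b <;> cases b' <;> cases b'' <;> simp at this

theorem not_isConj_of_map_eq_one {A B : Type*} [Group A] [Group B] (f : A →* B) {a b : A}
    (ha : f a = 1) (hb : f b ≠ 1) : ¬IsConj a b := fun h =>
  hb (isConj_one_right.mp (ha ▸ f.map_isConj h))

namespace RAAGPaper

open scoped commutatorElement

variable {V : Type}

section Lift

variable {G : SimpleGraph V} {H : Type*} [Group H]

theorem lift_eq_one_of_mem_raagRels {f : V → H} (hf : ∀ a b, G.Adj a b → Commute (f a) (f b))
    {r : FreeGroup V} (hr : r ∈ raagRels G) : FreeGroup.lift f r = 1 := by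
  obtain ⟨a, b, hab, rfl⟩ := hr
  simpa [map_commutatorElement] using (hf a b hab).commutator_eq

noncomputable def raagLift (f : V → H) (hf : ∀ a b, G.Adj a b → Commute (f a) (f b)) :
    RAAG G →* H :=
  PresentedGroup.toGroup fun _ => lift_eq_one_of_mem_raagRels hf

@[simp]
theorem raagLift_gen (f : V → H) (hf : ∀ a b, G.Adj a b → Commute (f a) (f b)) (w : V) :
    raagLift f hf (gen G w) = f w :=
  PresentedGroup.toGroup.of _

theorem commute_of_adj_of_isIndepSet {S : Set V} (hS : G.IsIndepSet S) {f : V → H}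
    (hf : ∀ w ∉ S, f w = 1) (a b : V) (hab : G.Adj a b) : Commute (f a) (f b) := by
  by_cases ha : a ∈ S
  · by_cases hb : b ∈ S
    · exact absurd hab (hS ha hb (G.ne_of_adj hab))
    · rw [hf b hb]; exact Commute.one_right _
  · rw [hf a ha]; exact Commute.one_left _

end Lift

section WordLength

variable {G : SimpleGraph V}

noncomputable def expSum (G : SimpleGraph V) (c : V → ℤ) : RAAG G →* Multiplicative ℤ :=
  raagLift (fun w => Multiplicative.ofAdd (c w)) fun _ _ _ => Commute.all _ _

theorem expSum_conj_commutatorElement (c : V → ℤ) (g₁ g₂ h : RAAG G) :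
    expSum G c (h * ⁅g₁, g₂⁆ * h⁻¹) = 1 := by
  rw [conjugate_commutatorElement, map_commutatorElement]
  exact (Commute.all _ _).commutator_eq

theorem wordLength_le {g : RAAG G} {l : List (V × Bool)}
    (hl : PresentedGroup.mk (raagRels G) (FreeGroup.mk l) = g) : wordLength G g ≤ l.length :=
  Nat.sInf_le ⟨l, hl, rfl⟩

theorem exists_word_length_eq_wordLength (g : RAAG G) :
    ∃ l : List (V × Bool), PresentedGroup.mk (raagRels G) (FreeGroup.mk l) = g ∧
      l.length = wordLength G g := by
  obtain ⟨y, rfl⟩ := PresentedGroup.mk_surjective (raagRels G) g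
  classical
  refine Nat.sInf_mem (s := {n | ∃ l : List (V × Bool),
    PresentedGroup.mk (raagRels G) (FreeGroup.mk l) = PresentedGroup.mk (raagRels G) y ∧
      l.length = n}) ⟨_, y.toWord, ?_, rfl⟩
  rw [FreeGroup.mk_toWord]

theorem wordLength_commutatorElement_gen_le (u v : V) :
    wordLength G ⁅gen G u, gen G v⁆ ≤ 4 :=
  wordLength_le (l := [(u, true), (v, true), (u, false), (v, false)]) rfl

theorem four_le_wordLength {g : RAAG G} (hg : g ≠ 1) (hexp : ∀ c, expSum G c g = 1) :
    4 ≤ wordLength G g := by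
  obtain ⟨l, rfl, hlen⟩ := exists_word_length_eq_wordLength g
  rw [← hlen]
  by_contra! hl
  refine hg ?_
  rw [FreeGroup.mk_eq_one_of_length_lt_four hl hexp, map_one]

theorem cycRed_commutatorElement_gen {u v : V} (hne : ⁅gen G u, gen G v⁆ ≠ 1) :
    CycRed G ⁅gen G u, gen G v⁆ := fun h =>
  (wordLength_commutatorElement_gen_le u v).trans <|
    four_le_wordLength (mt conj_eq_one_iff.mp hne) fun c => expSum_conj_commutatorElement c _ _ h

end WordLength

section Separation

variable {G : SimpleGraph V}

theorem mem_compl_st {x w : V} : w ∈ (st G x)ᶜ ↔ w ≠ x ∧ ¬G.Adj x w := by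
  simp [st, lk]

theorem ne_and_not_adj_of_not_gReach {calG : Set (Set V)} {S : Set V} {u v : V}
    (hu : u ∈ S) (hv : v ∈ S) (h : ¬gReach G calG S u v) : u ≠ v ∧ ¬G.Adj u v :=
  ⟨fun huv => h (huv ▸ .refl), fun hadj => h (.single ⟨hu, hv, .inl hadj⟩)⟩

theorem isIndepSet_triple {x u v : V} (hxu : ¬G.Adj x u) (hxv : ¬G.Adj x v)
    (huv : ¬G.Adj u v) : G.IsIndepSet {x, u, v} := by
  simp [SimpleGraph.isIndepSet_iff, Set.pairwise_insert, G.adj_comm, hxu, hxv, huv]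

theorem exists_hom_perm_fin_three {x u v : V} (hxu : x ≠ u) (hxv : x ≠ v) (huv : u ≠ v)
    (hind : G.IsIndepSet {x, u, v}) :
    ∃ f : RAAG G →* Equiv.Perm (Fin 3),
      f (gen G x) = Equiv.swap 1 2 ∧ f (gen G u) = Equiv.swap 0 1 ∧
        f (gen G v) = Equiv.swap 0 2 := by
  classical
  let ρ : V → Equiv.Perm (Fin 3) := fun w =>
    if w = x then Equiv.swap 1 2 else if w = u then Equiv.swap 0 1
    else if w = v then Equiv.swap 0 2 else 1
  have hρ : ∀ w ∉ ({x, u, v} : Set V), ρ w = 1 := by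
    intro w hw
    simp_all [ρ]
  refine ⟨raagLift ρ (commute_of_adj_of_isIndepSet hind hρ), ?_, ?_, ?_⟩ <;>
    simp [ρ, hxu.symm, hxv.symm, huv.symm]

end Separation

theorem commutator_not_conjugate_general (G : SimpleGraph V) (x u v : V)
    (hu : u ∈ (st G x)ᶜ) (hv : v ∈ (st G x)ᶜ)
    (hsep : ¬ gReach G ∅ ((st G x)ᶜ) u v)
    (K : Set V)
    (huK : u ∈ K) (hvK : v ∉ K) :
    ⁅gen G u, gen G v⁆ ≠ (1 : RAAG G) ∧
    CycRed G ⁅gen G u, gen G v⁆ ∧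
    (∀ π : MulAut (RAAG G),
      (∀ w ∈ K, π (gen G w) = gen G x * gen G w * (gen G x)⁻¹) →
      (∀ w ∉ K, π (gen G w) = gen G w) →
      π ⁅gen G u, gen G v⁆ = ⁅gen G x * gen G u * (gen G x)⁻¹, gen G v⁆) ∧
    ¬ IsConj (⁅gen G x * gen G u * (gen G x)⁻¹, gen G v⁆) ⁅gen G u, gen G v⁆ := by
  obtain ⟨hux, hxu⟩ := mem_compl_st.mp hu
  obtain ⟨hvx, hxv⟩ := mem_compl_st.mp hv
  obtain ⟨huv, hAuv⟩ := ne_and_not_adj_of_not_gReach hu hv hsep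
  obtain ⟨f, hfx, hfu, hfv⟩ :=
    exists_hom_perm_fin_three hux.symm hvx.symm huv (isIndepSet_triple hxu hxv hAuv)
  have hf_ne : f ⁅gen G u, gen G v⁆ ≠ 1 := by
    rw [map_commutatorElement, hfu, hfv]
    decide
  have hf_eq : f ⁅gen G x * gen G u * (gen G x)⁻¹, gen G v⁆ = 1 := by
    rw [map_commutatorElement, map_mul, map_mul, map_inv, hfx, hfu, hfv]
    decide
  have hne : ⁅gen G u, gen G v⁆ ≠ 1 := fun h => hf_ne (by rw [h, map_one])
  refine ⟨hne, cycRed_commutatorElement_gen hne, fun π hπK hπK' => ?_,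
    not_isConj_of_map_eq_one f hf_eq hf_ne⟩
  rw [map_commutatorElement, hπK u huK, hπK' v hvK]

/-- If `u, v` lie in distinct components of `Γ - st(x)`, then
`[u,v]` is a nontrivial cyclically reduced element, any partial conjugation
`π^x_K` (with `u ∈ K`, `v ∉ K`) sends it to `[xux⁻¹, v]`, and this image is not
conjugate to `[u,v]`. -/
theorem commutator_not_conjugate [Fintype V] (G : SimpleGraph V) (x u v : V)
    (hu : u ∈ (st G x)ᶜ) (hv : v ∈ (st G x)ᶜ)
    (hsep : ¬ gReach G ∅ ((st G x)ᶜ) u v)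
    (K : Set V) (hK : UnionOfComps G ∅ ((st G x)ᶜ) K)
    (huK : u ∈ K) (hvK : v ∉ K) :
    ⁅gen G u, gen G v⁆ ≠ (1 : RAAG G) ∧
    CycRed G ⁅gen G u, gen G v⁆ ∧
    (∀ π : MulAut (RAAG G),
      (∀ w ∈ K, π (gen G w) = gen G x * gen G w * (gen G x)⁻¹) →
      (∀ w ∉ K, π (gen G w) = gen G w) →
      π ⁅gen G u, gen G v⁆ = ⁅gen G x * gen G u * (gen G x)⁻¹, gen G v⁆) ∧
    ¬ IsConj (⁅gen G x * gen G u * (gen G x)⁻¹, gen G v⁆) ⁅gen G u, gen G v⁆ :=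
  commutator_not_conjugate_general G x u v hu hv hsep K huK hvK

end RAAGPaper
end

section
/- Let Γ be a finite simple graph, 𝒢 a saturated set of proper special subgroups (𝒢 contains every proper special subgroup invariant under Out⁰(A_Γ;𝒢)), and A_Δ ∈ 𝒢. Define 𝒢_Δ = {A_{Δ∩Λ} : A_Λ ∈ 𝒢, Δ∩Λ ≠ Δ}. Then for u ∈ Δ and any vertex v of Γ: u ≤_𝒢 v if and only if v ∈ Δ and u ≤_{𝒢_Δ} v, where ≤_{𝒢_Δ} is computed inside Δ (i.e., lk_Δ(u) ⊆ st_Δ(v) and every member of 𝒢_Δ containing u contains v). -/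
/-! Basic definitions: right-angled Artin groups, special subgroups,
relative automorphism notions, and graph-theoretic notions from
Day–Wade, "Relative automorphism groups of right-angled Artin groups". -/

namespace RAAGPaper

variable {V : Type}

open scoped commutatorElement

/-! The only substantive point is the part of `lk(u)` outside `Δ`: for `w ∉ Δ`, saturation puts
`lk(w) ∩ Δ` into `𝒢` (it is upwards closed, and any `y` outside it either lies outside `Δ`, so
that `Δ` itself joins two of its vertices in `𝒢^y`, or lies in `Δ`, so that `w ∉ st(y)` joins
them through `w`). If `u` is adjacent to `w` and `u ≤_{𝒢_Δ} v`, this member of `𝒢` contains `u`,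
hence `v`, so `v` is adjacent to `w` as well. -/

section InducedOrder

variable {G : SimpleGraph V} {calG : Set (Set V)} {Δ : Set V}

theorem upClosed_lk_inter (hΔ : Δ ∈ calG) {x : V} (hx : x ∉ Δ) :
    UpClosed G calG (lk G x ∩ Δ) := by
  rintro a ⟨hxa, haΔ⟩ w ⟨hstd, hG⟩
  have hwΔ : w ∈ Δ := hG Δ hΔ haΔ
  rcases hstd (hxa.symm) with rfl | hwx
  · exact absurd hwΔ hx
  · exact ⟨hwx.symm, hwΔ⟩

theorem notStarSep_lk_inter (hΔ : Δ ∈ calG) {x : V} (hx : x ∉ Δ) :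
    NotStarSep G calG (lk G x ∩ Δ) := by
  intro y hy a b ha hb hay hby
  by_cases hyΔ : y ∈ Δ
  · have hxy : x ∉ st G y := by
      rintro (rfl | hyx)
      · exact hx hyΔ
      · exact hy ⟨hyx.symm, hyΔ⟩
    exact .head ⟨hay, hxy, .inl ha.1.symm⟩ (.single ⟨hxy, hby, .inl hb.1⟩)
  · exact .single ⟨hay, hby, .inr ⟨Δ, ⟨hΔ, hyΔ⟩, ha.2, hb.2⟩⟩

theorem lk_inter_mem_of_saturated (hsat : Saturated G calG) (hΔ : Δ ∈ calG) {x : V}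
    (hx : x ∉ Δ) : lk G x ∩ Δ ∈ calG := by
  refine hsat _ (fun h => ?_) (upClosed_lk_inter hΔ hx) (notStarSep_lk_inter hΔ hx)
  exact hx (h.symm ▸ Set.mem_univ x : x ∈ lk G x ∩ Δ).2

theorem forall_mem_inducedG_iff {u v : V} (hu : u ∈ Δ) (hv : v ∈ Δ) :
    (∀ Θ ∈ inducedG calG Δ, u ∈ Θ → v ∈ Θ) ↔ ∀ Λ ∈ calG, u ∈ Λ → v ∈ Λ := by
  constructor
  · intro hind Λ hΛ huΛ
    by_cases hsub : Δ ∩ Λ = Δ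
    · exact Set.inter_eq_left.mp hsub hv
    · exact (hind _ ⟨Λ, hΛ, rfl, hsub⟩ ⟨hu, huΛ⟩).2
  · rintro hG Θ ⟨Λ, hΛ, rfl, -⟩ huΘ
    exact ⟨hv, hG Λ hΛ huΘ.2⟩

theorem leIn_of_stdLE {u v : V} (h : stdLE G u v) : leIn G Δ u v := by
  rintro w ⟨hwΔ, huw⟩
  rcases h huw with rfl | hvw
  · exact .inl rfl
  · exact .inr ⟨hwΔ, hvw⟩

theorem stdLE_of_leIn {u v : V} (h : leIn G Δ u v)
    (hout : ∀ w ∉ Δ, u ∈ lk G w → v ∈ lk G w) : stdLE G u v := by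
  intro w huw
  by_cases hwΔ : w ∈ Δ
  · rcases h ⟨hwΔ, huw⟩ with rfl | hvw
    · exact .inl rfl
    · exact .inr hvw.2
  · exact .inr (hout w hwΔ huw.symm).symm

end InducedOrder

theorem induced_order_general (G : SimpleGraph V) (calG : Set (Set V))
    (hsat : Saturated G calG)
    (Δ : Set V) (hΔ : Δ ∈ calG) (u : V) (hu : u ∈ Δ) (v : V) :
    gLE G calG u v ↔
      (v ∈ Δ ∧ leIn G Δ u v ∧ ∀ Θ ∈ inducedG calG Δ, u ∈ Θ → v ∈ Θ) := by
  constructor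
  · rintro ⟨hstd, hG⟩
    have hv : v ∈ Δ := hG Δ hΔ hu
    exact ⟨hv, leIn_of_stdLE hstd, (forall_mem_inducedG_iff hu hv).2 hG⟩
  · rintro ⟨hv, hle, hind⟩
    have hG := (forall_mem_inducedG_iff hu hv).1 hind
    refine ⟨stdLE_of_leIn hle fun w hw huw => ?_, hG⟩
    exact (hG _ (lk_inter_mem_of_saturated hsat hΔ hw) ⟨huw, hu⟩).1

/-- For saturated `𝒢` and `A_Δ ∈ 𝒢`: for `u ∈ Δ` and any vertex
`v`, `u ≤_𝒢 v` iff `v ∈ Δ` and `u ≤_{𝒢_Δ} v` computed inside `Δ`. -/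
theorem induced_order [Fintype V] (G : SimpleGraph V) (calG : Set (Set V))
    (hprop : Proper calG) (hsat : Saturated G calG)
    (Δ : Set V) (hΔ : Δ ∈ calG) (u : V) (hu : u ∈ Δ) (v : V) :
    gLE G calG u v ↔
      (v ∈ Δ ∧ leIn G Δ u v ∧ ∀ Θ ∈ inducedG calG Δ, u ∈ Θ → v ∈ Θ) :=
  induced_order_general G calG hsat Δ hΔ u hu v

end RAAGPaper
end
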